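/- Let I be an interval-valued Markov chain on finite state set Q with bounds Ť ≤ T̂, and let M₁, M₂ be Markov chains induced by I (i.e., whose transition matrices T₁, T₂ satisfy Ť ≤ T_k ≤ T̂ entrywise) in which a common set B ⊆ Q is a BSCC of both. If C₁ = {q : P_{M₁}(q ⊨ ◇B) = 1} and C₂ = {q : P_{M₂}(q ⊨ ◇B) = 1}, then there exists a Markov chain M₃ induced by I with P_{M₃}(q ⊨ ◇B) = 1 for all q ∈ C₁ ∪ C₂. -/
import Mathlib


open scoped Classical

/-- Bottom strongly connected component of a finite Markov chain. -/
def IsBSCC {Q : Type*} [Fintype Q] (T : Q → Q → ℝ) (B : Finset Q) : Prop :=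
  (∀ q ∈ B, ∀ t ∈ B,
    Relation.ReflTransGen (fun u v => u ∈ B ∧ v ∈ B ∧ 0 < T u v) q t) ∧
  (∀ B' : Finset Q, B ⊆ B' →
    (∀ q ∈ B', ∀ t ∈ B',
      Relation.ReflTransGen (fun u v => u ∈ B' ∧ v ∈ B' ∧ 0 < T u v) q t) → B' = B) ∧
  (∀ s ∈ B, ∑ t ∈ B, T s t = 1)

/-- Probability of reaching the set `S` within `m` steps, starting from a given state. -/
noncomputable def reachN {Q : Type*} [Fintype Q] (T : Q → Q → ℝ) (S : Set Q) :
    ℕ → Q → ℝ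
  | 0, q => if q ∈ S then 1 else 0
  | m + 1, q => if q ∈ S then 1 else ∑ t, T q t * reachN T S m t

/-- Probability of eventually reaching `S` from `q`: `P(q ⊨ ◇S)`. -/
noncomputable def reachProb {Q : Type*} [Fintype Q] (T : Q → Q → ℝ) (S : Set Q)
    (q : Q) : ℝ :=
  ⨆ m : ℕ, reachN T S m q

/-- The Markov chain with transition matrix `T` is induced by the IMC with bounds
`Tl ≤ Tu`: `Tl ≤ T ≤ Tu` entrywise and each row of `T` sums to 1. -/
def InducedBy {Q : Type*} [Fintype Q] (Tl Tu T : Q → Q → ℝ) : Prop :=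
  (∀ q t, Tl q t ≤ T q t ∧ T q t ≤ Tu q t) ∧ (∀ q, ∑ t, T q t = 1)

section Aux
variable {Q : Type*} [Fintype Q] {T : Q → Q → ℝ} {S : Set Q}

lemma reachN_nonneg (hT0 : ∀ q t, 0 ≤ T q t) :
    ∀ m q, 0 ≤ reachN T S m q := by
  intro m
  induction m with
  | zero => intro q; rw [reachN]; split <;> norm_num
  | succ m ih =>
    intro q; rw [reachN]; split
    · norm_num
    · exact Finset.sum_nonneg fun t _ => mul_nonneg (hT0 q t) (ih t)

lemma reachN_le_one (hT0 : ∀ q t, 0 ≤ T q t) (hT1 : ∀ q, ∑ t, T q t = 1) :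
    ∀ m q, reachN T S m q ≤ 1 := by
  intro m
  induction m with
  | zero => intro q; rw [reachN]; split <;> norm_num
  | succ m ih =>
    intro q; rw [reachN]; split
    · norm_num
    · calc ∑ t, T q t * reachN T S m t ≤ ∑ t, T q t * 1 :=
            Finset.sum_le_sum fun t _ => mul_le_mul_of_nonneg_left (ih t) (hT0 q t)
        _ = 1 := by simp [hT1 q]

lemma reachN_mono (hT0 : ∀ q t, 0 ≤ T q t) (q : Q) :
    Monotone (fun m => reachN T S m q) := by
  apply monotone_nat_of_le_succ
  intro m
  induction m generalizing q with
  | zero =>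
    rw [reachN, reachN]; split
    · norm_num
    · exact Finset.sum_nonneg fun t _ => mul_nonneg (hT0 q t) (reachN_nonneg hT0 0 t)
  | succ m ih =>
    rw [reachN, reachN]; split
    · norm_num
    · exact Finset.sum_le_sum fun t _ => mul_le_mul_of_nonneg_left (ih t) (hT0 q t)

lemma reachN_bdd (hT0 : ∀ q t, 0 ≤ T q t) (hT1 : ∀ q, ∑ t, T q t = 1) (q : Q) :
    BddAbove (Set.range fun m => reachN T S m q) :=
  ⟨1, by rintro x ⟨m, rfl⟩; exact reachN_le_one hT0 hT1 m q⟩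

lemma reachN_le_reachProb (hT0 : ∀ q t, 0 ≤ T q t) (hT1 : ∀ q, ∑ t, T q t = 1)
    (m : ℕ) (q : Q) : reachN T S m q ≤ reachProb T S q :=
  le_ciSup (reachN_bdd hT0 hT1 q) m

lemma reachProb_le_one (hT0 : ∀ q t, 0 ≤ T q t) (hT1 : ∀ q, ∑ t, T q t = 1)
    (q : Q) : reachProb T S q ≤ 1 :=
  ciSup_le fun m => reachN_le_one hT0 hT1 m q

lemma reachProb_of_mem (hq : q ∈ S) : reachProb T S q = 1 := by
  have h : ∀ m, reachN T S m q = 1 := by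
    intro m; cases m <;> rw [reachN] <;> simp [hq]
  simp [reachProb, h]

lemma exists_reachN_pos (hT0 : ∀ q t, 0 ≤ T q t) (hT1 : ∀ q, ∑ t, T q t = 1)
    {q : Q} (hq : reachProb T S q = 1) : ∃ m, 0 < reachN T S m q := by
  by_contra h
  push_neg at h
  have : reachProb T S q ≤ 0 := ciSup_le fun m => h m
  linarith

lemma tendsto_reachN (hT0 : ∀ q t, 0 ≤ T q t) (hT1 : ∀ q, ∑ t, T q t = 1) (q : Q) :
    Filter.Tendsto (fun m => reachN T S m q) Filter.atTop (nhds (reachProb T S q)) :=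
  tendsto_atTop_ciSup (reachN_mono hT0 q) (reachN_bdd hT0 hT1 q)

lemma reachProb_fix (hT0 : ∀ q t, 0 ≤ T q t) (hT1 : ∀ q, ∑ t, T q t = 1)
    {q : Q} (hq : q ∉ S) :
    reachProb T S q = ∑ t, T q t * reachProb T S t := by
  have h1 : Filter.Tendsto (fun m => reachN T S (m+1) q) Filter.atTop
      (nhds (reachProb T S q)) :=
    (tendsto_reachN hT0 hT1 q).comp (Filter.tendsto_add_atTop_nat 1)
  have h2 : Filter.Tendsto (fun m => reachN T S (m+1) q) Filter.atTop
      (nhds (∑ t, T q t * reachProb T S t)) := by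
    have heq : ∀ m, reachN T S (m+1) q = ∑ t, T q t * reachN T S m t := by
      intro m; rw [reachN]; simp [hq]
    simp only [heq]
    exact tendsto_finset_sum _ fun t _ =>
      (tendsto_reachN hT0 hT1 t).const_mul (T q t)
  exact tendsto_nhds_unique h1 h2

lemma reachN_zero_of_closed (hT0 : ∀ q t, 0 ≤ T q t) {B : Finset Q} {S' : Set Q}
    (hS : ∀ q ∈ S', q ∉ B ∧ ∀ t, 0 < T q t → t ∈ S') :
    ∀ m, ∀ q ∈ S', reachN T (↑B) m q = 0 := by
  intro m
  induction m with
  | zero => intro q hq; rw [reachN]; simp [(hS q hq).1]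
  | succ m ih =>
    intro q hq
    rw [reachN]
    simp only [Finset.mem_coe, (hS q hq).1, if_false]
    apply Finset.sum_eq_zero
    intro t _
    rcases (hT0 q t).lt_or_eq with h | h
    · rw [ih t ((hS q hq).2 t h), mul_zero]
    · rw [← h, zero_mul]

end Aux

section Aux2
variable {Q : Type*} [Fintype Q] {T : Q → Q → ℝ}

lemma reachProb_closed (hT0 : ∀ q t, 0 ≤ T q t) (hT1 : ∀ q, ∑ t, T q t = 1)
    {B : Finset Q} (hBc : ∀ s ∈ B, ∑ t ∈ B, T s t = 1)
    {q : Q} (hq : reachProb T (↑B) q = 1) {t : Q} (ht : 0 < T q t) :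
    reachProb T (↑B) t = 1 := by
  by_cases hqB : q ∈ B
  · by_cases htB : t ∈ B
    · exact reachProb_of_mem htB
    · exfalso
      have h0 : ∑ v ∈ Finset.univ \ B, T q v = 0 := by
        have h1 := hBc q hqB
        have h2 := hT1 q
        rw [← Finset.sum_sdiff (Finset.subset_univ B)] at h2
        linarith
      have hz : T q t = 0 :=
        (Finset.sum_eq_zero_iff_of_nonneg (fun v _ => hT0 q v)).mp h0 t (by simp [htB])
      linarith
  · have hfix := reachProb_fix hT0 hT1 (S := (↑B : Set Q)) (q := q) (by simpa using hqB)
    have hzero : ∑ v, T q v * (1 - reachProb T (↑B) v) = 0 := by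
      simp only [mul_sub, mul_one]
      rw [Finset.sum_sub_distrib, hT1 q, ← hfix, hq]; ring
    have hnn : ∀ v ∈ Finset.univ, 0 ≤ T q v * (1 - reachProb T (↑B) v) :=
      fun v _ => mul_nonneg (hT0 q v)
        (by linarith [reachProb_le_one hT0 hT1 (S := (↑B : Set Q)) v])
    have h := (Finset.sum_eq_zero_iff_of_nonneg hnn).mp hzero t (Finset.mem_univ t)
    nlinarith

lemma reach_one_of_closed (hT0 : ∀ q t, 0 ≤ T q t) (hT1 : ∀ q, ∑ t, T q t = 1)
    {B : Finset Q} {D : Set Q}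
    (hcl : ∀ q ∈ D, ∀ t, 0 < T q t → t ∈ D)
    (hpos : ∀ q ∈ D, ∃ k, 0 < reachN T (↑B) k q) :
    ∀ q ∈ D, reachProb T (↑B) q = 1 := by
  intro q hq
  have hF : (Finset.univ.filter (· ∈ D)).Nonempty := ⟨q, by simp [hq]⟩
  obtain ⟨q₁, hq₁F, hmin⟩ := Finset.exists_min_image _ (reachProb T (↑B)) hF
  have hq₁D : q₁ ∈ D := (Finset.mem_filter.mp hq₁F).2
  have hrle : ∀ t ∈ D, reachProb T (↑B) q₁ ≤ reachProb T (↑B) t :=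
    fun t ht => hmin t (by simp [ht])
  rcases eq_or_lt_of_le (reachProb_le_one hT0 hT1 (S := (↑B : Set Q)) q₁) with h1 | h1
  · exact le_antisymm (reachProb_le_one hT0 hT1 q) (h1 ▸ hrle q hq)
  exfalso
  set r := reachProb T (↑B : Set Q) with hr
  set S' : Set Q := {u | u ∈ D ∧ r u = r q₁} with hS'
  have hS : ∀ u ∈ S', u ∉ B ∧ ∀ t, 0 < T u t → t ∈ S' := by
    rintro u ⟨huD, hur⟩
    have huB : u ∉ B := by
      intro hB
      have h2 : r u = 1 := reachProb_of_mem (by simpa using hB)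
      rw [h2] at hur; linarith
    refine ⟨huB, ?_⟩
    intro t ht
    have htD : t ∈ D := hcl u huD t ht
    have hfix : r u = ∑ v, T u v * r v := reachProb_fix hT0 hT1 (by simpa using huB)
    have hzero : ∑ v, T u v * (r v - r u) = 0 := by
      simp only [mul_sub]
      rw [Finset.sum_sub_distrib, ← Finset.sum_mul, hT1 u, ← hfix]; ring
    have hnn : ∀ v ∈ Finset.univ, 0 ≤ T u v * (r v - r u) := by
      intro v _
      rcases (hT0 u v).lt_or_eq with hv | hv
      · have hvD : v ∈ D := hcl u huD v hv
        have := hrle v hvD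
        nlinarith
      · rw [← hv, zero_mul]
    have h := (Finset.sum_eq_zero_iff_of_nonneg hnn).mp hzero t (Finset.mem_univ t)
    have hrt : r t = r u := by nlinarith
    exact ⟨htD, by rw [hrt, hur]⟩
  obtain ⟨k, hk⟩ := hpos q₁ hq₁D
  rw [reachN_zero_of_closed hT0 hS k q₁ ⟨hq₁D, rfl⟩] at hk
  exact lt_irrefl 0 hk

end Aux2

/-- If `B` is a BSCC of two Markov chains `M₁, M₂` induced by an IMC
`(Tl, Tu)`, and `C₁, C₂` are the sets of states reaching `B` with probability 1 in
`M₁` and `M₂` respectively, then there is an induced Markov chain `M₃` in which every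
state of `C₁ ∪ C₂` reaches `B` with probability 1. -/
theorem stmt_15 {Q : Type*} [Fintype Q]
    (Tl Tu : Q → Q → ℝ)
    (hTl0 : ∀ q t, 0 ≤ Tl q t) (hTu1 : ∀ q t, Tu q t ≤ 1)
    (hlu : ∀ q t, Tl q t ≤ Tu q t)
    (hrow : ∀ q, (∑ t, Tl q t) ≤ 1 ∧ 1 ≤ ∑ t, Tu q t)
    (T₁ T₂ : Q → Q → ℝ)
    (h₁ : InducedBy Tl Tu T₁) (h₂ : InducedBy Tl Tu T₂)
    (B : Finset Q) (hB₁ : IsBSCC T₁ B) (hB₂ : IsBSCC T₂ B)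
    (C₁ C₂ : Set Q)
    (hC₁ : C₁ = {q | reachProb T₁ (↑B) q = 1})
    (hC₂ : C₂ = {q | reachProb T₂ (↑B) q = 1}) :
    ∃ T₃ : Q → Q → ℝ, InducedBy Tl Tu T₃ ∧
      ∀ q ∈ C₁ ∪ C₂, reachProb T₃ (↑B) q = 1 := by
  obtain ⟨hb₁, hs₁⟩ := h₁
  obtain ⟨hb₂, hs₂⟩ := h₂
  have hT₁0 : ∀ q t, 0 ≤ T₁ q t := fun q t => le_trans (hTl0 q t) (hb₁ q t).1
  have hT₂0 : ∀ q t, 0 ≤ T₂ q t := fun q t => le_trans (hTl0 q t) (hb₂ q t).1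
  set T₃ : Q → Q → ℝ := fun q t => if q ∈ C₁ then T₁ q t else T₂ q t with hT₃
  have hT₃0 : ∀ q t, 0 ≤ T₃ q t := by
    intro q t; by_cases h : q ∈ C₁ <;> simp [hT₃, h, hT₁0, hT₂0]
  have hT₃1 : ∀ q, ∑ t, T₃ q t = 1 := by
    intro q; by_cases h : q ∈ C₁ <;> simp [hT₃, h, hs₁, hs₂]
  -- closedness of C₁ under T₁ and C₂ under T₂
  have hcl₁ : ∀ q ∈ C₁, ∀ t, 0 < T₁ q t → t ∈ C₁ := by
    intro q hq t ht
    rw [hC₁] at hq ⊢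
    exact reachProb_closed hT₁0 hs₁ hB₁.2.2 hq ht
  have hcl₂ : ∀ q ∈ C₂, ∀ t, 0 < T₂ q t → t ∈ C₂ := by
    intro q hq t ht
    rw [hC₂] at hq ⊢
    exact reachProb_closed hT₂0 hs₂ hB₂.2.2 hq ht
  -- positive reach transfer from T₁ on C₁
  have htr₁ : ∀ m, ∀ q ∈ C₁, 0 < reachN T₁ (↑B) m q → 0 < reachN T₃ (↑B) m q := by
    intro m
    induction m with
    | zero => intro q _ h; rwa [reachN] at h ⊢
    | succ m ih =>
      intro q hq h
      by_cases hqB : q ∈ B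
      · rw [reachN]; simp [hqB]
      · rw [reachN] at h; simp only [Finset.mem_coe, hqB, if_false] at h
        have hex : ∃ t, 0 < T₁ q t * reachN T₁ (↑B) m t := by
          by_contra hc
          push_neg at hc
          have : ∑ t, T₁ q t * reachN T₁ (↑B) m t ≤ 0 :=
            Finset.sum_nonpos fun t _ => hc t
          linarith
        obtain ⟨t, htpos⟩ := hex
        have h1 : 0 < T₁ q t := by
          rcases (hT₁0 q t).lt_or_eq with h' | h'
          · exact h'
          · rw [← h', zero_mul] at htpos; linarith
        have h2 : 0 < reachN T₁ (↑B) m t := by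
          rcases (reachN_nonneg hT₁0 m t (S := (↑B : Set Q))).lt_or_eq with h' | h'
          · exact h'
          · rw [← h', mul_zero] at htpos; linarith
        have htC₁ : t ∈ C₁ := hcl₁ q hq t h1
        have h3 := ih t htC₁ h2
        rw [reachN]; simp only [Finset.mem_coe, hqB, if_false]
        have hterm : 0 < T₃ q t * reachN T₃ (↑B) m t := by
          have : T₃ q t = T₁ q t := by simp [hT₃, hq]
          rw [this]; exact mul_pos h1 h3
        calc (0:ℝ) < T₃ q t * reachN T₃ (↑B) m t := hterm
          _ ≤ ∑ u, T₃ q u * reachN T₃ (↑B) m u :=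
            Finset.single_le_sum (fun u _ =>
              mul_nonneg (hT₃0 q u) (reachN_nonneg hT₃0 m u)) (Finset.mem_univ t)
  have hpos₁ : ∀ q ∈ C₁, ∃ k, 0 < reachN T₃ (↑B) k q := by
    intro q hq
    have hq' : reachProb T₁ (↑B) q = 1 := by rw [hC₁] at hq; exact hq
    obtain ⟨m, hm⟩ := exists_reachN_pos hT₁0 hs₁ hq'
    exact ⟨m, htr₁ m q hq hm⟩
  -- positive reach transfer from T₂ on C₂
  have htr₂ : ∀ m, ∀ q ∈ C₂, 0 < reachN T₂ (↑B) m q → ∃ k, 0 < reachN T₃ (↑B) k q := by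
    intro m
    induction m with
    | zero =>
      intro q _ h
      exact ⟨0, by rwa [reachN] at h ⊢⟩
    | succ m ih =>
      intro q hq h
      by_cases hqB : q ∈ B
      · exact ⟨0, by rw [reachN]; simp [hqB]⟩
      by_cases hqC₁ : q ∈ C₁
      · exact hpos₁ q hqC₁
      · rw [reachN] at h; simp only [Finset.mem_coe, hqB, if_false] at h
        have hex : ∃ t, 0 < T₂ q t * reachN T₂ (↑B) m t := by
          by_contra hc
          push_neg at hc
          have : ∑ t, T₂ q t * reachN T₂ (↑B) m t ≤ 0 :=
            Finset.sum_nonpos fun t _ => hc t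
          linarith
        obtain ⟨t, htpos⟩ := hex
        have h1 : 0 < T₂ q t := by
          rcases (hT₂0 q t).lt_or_eq with h' | h'
          · exact h'
          · rw [← h', zero_mul] at htpos; linarith
        have h2 : 0 < reachN T₂ (↑B) m t := by
          rcases (reachN_nonneg hT₂0 m t (S := (↑B : Set Q))).lt_or_eq with h' | h'
          · exact h'
          · rw [← h', mul_zero] at htpos; linarith
        have htC₂ : t ∈ C₂ := hcl₂ q hq t h1
        obtain ⟨k, hk⟩ := ih t htC₂ h2
        refine ⟨k + 1, ?_⟩
        rw [reachN]; simp only [Finset.mem_coe, hqB, if_false]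
        have hterm : 0 < T₃ q t * reachN T₃ (↑B) k t := by
          have : T₃ q t = T₂ q t := by simp [hT₃, hqC₁]
          rw [this]; exact mul_pos h1 hk
        calc (0:ℝ) < T₃ q t * reachN T₃ (↑B) k t := hterm
          _ ≤ ∑ u, T₃ q u * reachN T₃ (↑B) k u :=
            Finset.single_le_sum (fun u _ =>
              mul_nonneg (hT₃0 q u) (reachN_nonneg hT₃0 k u)) (Finset.mem_univ t)
  refine ⟨T₃, ⟨fun q t => ?_, hT₃1⟩, ?_⟩
  · by_cases h : q ∈ C₁ <;> simp only [hT₃, h, if_true, if_false] <;>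
      [exact hb₁ q t; exact hb₂ q t]
  · -- apply the key lemma with D = C₁ ∪ C₂
    apply reach_one_of_closed hT₃0 hT₃1
    · intro q hq t ht
      rcases hq with hq | hq
      · left
        apply hcl₁ q hq t
        have : T₃ q t = T₁ q t := by simp [hT₃, hq]
        rwa [this] at ht
      · by_cases hqC₁ : q ∈ C₁
        · left
          apply hcl₁ q hqC₁ t
          have : T₃ q t = T₁ q t := by simp [hT₃, hqC₁]
          rwa [this] at ht
        · right
          apply hcl₂ q hq t
          have : T₃ q t = T₂ q t := by simp [hT₃, hqC₁]
          rwa [this] at ht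
    · intro q hq
      rcases hq with hq | hq
      · exact hpos₁ q hq
      · have hq' : reachProb T₂ (↑B) q = 1 := by rw [hC₂] at hq; exact hq
        obtain ⟨m, hm⟩ := exists_reachN_pos hT₂0 hs₂ hq'
        exact htr₂ m q hq hm
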